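/- arXiv:1901.01840 — 2 statements merged into one kernel-verified Lean document; each statement's English description precedes it below -/
import Mathlib

section
/- Let q be a real number with q > 0 and q ≠ 1, let n be a natural number, let j be a natural number with j ≤ n, and let p₀ be a real number. Then the j-th order q-deformed factorial moment of the q-binomial distribution satisfies Σ_{κ=j}^{n} [κ]_{j,q} · C_q(n,κ) · p₀^κ · Π_{i=1}^{n−κ}(1 − p₀·q^{i−1}) = [n]_{j,q} · p₀^j. -/
/-- The q-deformed number `[m]_q = (1 - q^m)/(1 - q)` for `m ∈ ℤ`. -/
noncomputable def qNumZ (q : ℝ) (m : ℤ) : ℝ := (1 - q ^ m) / (1 - q)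

/-- The j-th order q-factorial `[x]_{j,q} = ∏_{v=0}^{j-1} [x-v]_q` for `x ∈ ℤ`. -/
noncomputable def qFacOrdZ (q : ℝ) (x : ℤ) (j : ℕ) : ℝ :=
  ∏ v ∈ Finset.range j, qNumZ q (x - (v : ℤ))

/-- The q-factorial `[n]_q! = ∏_{i=1}^n [i]_q`. -/
noncomputable def qFac (q : ℝ) (n : ℕ) : ℝ := ∏ i ∈ Finset.range n, qNumZ q ((i : ℤ) + 1)

/-- The q-binomial coefficient `C_q(n,κ)`. -/
noncomputable def qBinom (q : ℝ) (n k : ℕ) : ℝ := qFac q n / (qFac q k * qFac q (n - k))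

lemma qNumZ_nat (q : ℝ) (k : ℕ) : qNumZ q ((k : ℤ)) = (1 - q ^ k) / (1 - q) := by
  rw [qNumZ, zpow_natCast]

lemma qNumZ_succ_ne_zero {q : ℝ} (hq : 0 < q) (hq1 : q ≠ 1) (k : ℕ) :
    qNumZ q ((k : ℤ) + 1) ≠ 0 := by
  rw [show ((k : ℤ) + 1) = ((k + 1 : ℕ) : ℤ) by push_cast; ring, qNumZ_nat]
  have hpow : q ^ (k + 1) ≠ 1 := by
    rcases hq1.lt_or_gt with h | h
    · exact (pow_lt_one₀ hq.le h k.succ_ne_zero).ne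
    · exact (one_lt_pow₀ h k.succ_ne_zero).ne'
  exact div_ne_zero (sub_ne_zero.mpr (Ne.symm hpow)) (sub_ne_zero.mpr (Ne.symm hq1))

lemma qFac_ne_zero {q : ℝ} (hq : 0 < q) (hq1 : q ≠ 1) (n : ℕ) : qFac q n ≠ 0 := by
  rw [qFac]
  exact Finset.prod_ne_zero_iff.mpr fun i _ => qNumZ_succ_ne_zero hq hq1 i

lemma qFac_succ (q : ℝ) (n : ℕ) : qFac q (n + 1) = qFac q n * qNumZ q ((n : ℤ) + 1) := by
  rw [qFac, Finset.prod_range_succ]; rfl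

lemma qBinom_zero {q : ℝ} (hq : 0 < q) (hq1 : q ≠ 1) (n : ℕ) : qBinom q n 0 = 1 := by
  rw [qBinom]
  simp only [Nat.sub_zero, qFac, Finset.prod_range_zero, one_mul]
  exact div_self (qFac_ne_zero hq hq1 n)

lemma qBinom_self {q : ℝ} (hq : 0 < q) (hq1 : q ≠ 1) (n : ℕ) : qBinom q n n = 1 := by
  rw [qBinom, Nat.sub_self]
  simp only [qFac, Finset.prod_range_zero, mul_one]
  exact div_self (qFac_ne_zero hq hq1 n)

/-- q-Pascal identity. -/
lemma qBinom_pascal {q : ℝ} (hq : 0 < q) (hq1 : q ≠ 1) (m M : ℕ) (h : m < M) :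
    qBinom q (M + 1) (m + 1)
      = q ^ (M - m) * qBinom q M m + qBinom q M (m + 1) := by
  obtain ⟨d, rfl⟩ : ∃ d, M = m + 1 + d := ⟨M - (m + 1), by omega⟩
  have h1 : m + 1 + d + 1 - (m + 1) = d + 1 := by omega
  have h2 : m + 1 + d - m = d + 1 := by omega
  have h3 : m + 1 + d - (m + 1) = d := by omega
  have h4 : m + 1 + d - m = d + 1 := by omega
  rw [qBinom, qBinom, qBinom, h1, h2, h3]
  have hfm := qFac_ne_zero hq hq1 m
  have hfm1 := qFac_ne_zero hq hq1 (m + 1)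
  have hfd := qFac_ne_zero hq hq1 d
  have hfd1 := qFac_ne_zero hq hq1 (d + 1)
  have hfM := qFac_ne_zero hq hq1 (m + 1 + d)
  have eM : qFac q (m + 1 + d + 1) = qFac q (m + 1 + d) * qNumZ q ((m + 1 + d : ℕ) + 1) := by
    rw [qFac_succ]
  have em : qFac q (m + 1) = qFac q m * qNumZ q ((m : ℤ) + 1) := qFac_succ q m
  have ed : qFac q (d + 1) = qFac q d * qNumZ q ((d : ℤ) + 1) := qFac_succ q d
  have key : qNumZ q ((m + 1 + d : ℕ) + 1)
      = q ^ (d + 1) * qNumZ q ((m : ℤ) + 1) + qNumZ q ((d : ℤ) + 1) := by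
    rw [show ((m + 1 + d : ℕ) : ℤ) + 1 = ((m + 1 + d + 1 : ℕ) : ℤ) by push_cast; ring,
      show ((m : ℤ) + 1) = ((m + 1 : ℕ) : ℤ) by push_cast; ring,
      show ((d : ℤ) + 1) = ((d + 1 : ℕ) : ℤ) by push_cast; ring,
      qNumZ_nat, qNumZ_nat, qNumZ_nat]
    have hq' : (1 : ℝ) - q ≠ 0 := sub_ne_zero.mpr (Ne.symm hq1)
    field_simp
    ring
  rw [eM, em, ed, key]
  have hnm := qNumZ_succ_ne_zero hq hq1 m
  have hnd := qNumZ_succ_ne_zero hq hq1 d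
  field_simp

/-- The q-binomial distribution sums to 1. -/
lemma qBinom_sum_one {q : ℝ} (hq : 0 < q) (hq1 : q ≠ 1) (p : ℝ) (M : ℕ) :
    ∑ m ∈ Finset.range (M + 1),
      qBinom q M m * p ^ m * ∏ i ∈ Finset.range (M - m), (1 - p * q ^ i) = 1 := by
  induction M with
  | zero => simp [qBinom_self hq hq1 0]
  | succ M ih =>
    set A : ℕ → ℝ := fun k => ∏ i ∈ Finset.range k, (1 - p * q ^ i) with hA
    set f : ℕ → ℝ := fun k => qBinom q (M + 1) k * p ^ k * A (M + 1 - k) with hf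
    set g : ℕ → ℝ := fun m => q ^ (M - m) * qBinom q M m * p ^ (m + 1) * A (M - m) with hg
    set h : ℕ → ℝ := fun m => qBinom q M m * p ^ m * A (M + 1 - m) with hh
    have step : ∀ m ∈ Finset.range M, f (m + 1) = g m + h (m + 1) := by
      intro m hm
      rw [Finset.mem_range] at hm
      have hsub : M + 1 - (m + 1) = M - m := by omega
      have hsub2 : M - (m + 1) + 1 = M - m := by omega
      simp only [hf, hg, hh, hsub]
      rw [qBinom_pascal hq hq1 m M hm]
      ring
    have hf0 : f 0 = h 0 := by
      simp only [hf, hh, Nat.sub_zero, qBinom_zero hq hq1]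
    have hfM : f (M + 1) = g M := by
      simp only [hf, hg, Nat.sub_self, qBinom_self hq hq1, pow_zero, one_mul]
    calc ∑ m ∈ Finset.range (M + 1 + 1), f m
        = (∑ m ∈ Finset.range (M + 1), f (m + 1)) + f 0 := Finset.sum_range_succ' f (M + 1)
      _ = ((∑ m ∈ Finset.range M, f (m + 1)) + f (M + 1)) + f 0 := by
          rw [Finset.sum_range_succ]
      _ = ((∑ m ∈ Finset.range M, (g m + h (m + 1))) + g M) + h 0 := by
          rw [Finset.sum_congr rfl step, hf0, hfM]
      _ = (∑ m ∈ Finset.range M, g m) + g M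
            + ((∑ m ∈ Finset.range M, h (m + 1)) + h 0) := by
          rw [Finset.sum_add_distrib]; ring
      _ = (∑ m ∈ Finset.range (M + 1), g m) + ∑ m ∈ Finset.range (M + 1), h m := by
          rw [Finset.sum_range_succ g M, Finset.sum_range_succ' h M]
      _ = ∑ m ∈ Finset.range (M + 1), (g m + h m) := (Finset.sum_add_distrib).symm
      _ = ∑ m ∈ Finset.range (M + 1), qBinom q M m * p ^ m * A (M - m) := by
          refine Finset.sum_congr rfl fun m hm => ?_
          rw [Finset.mem_range] at hm
          have hsub : M + 1 - m = (M - m) + 1 := by omega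
          have hqe : M - m + m = M := by omega
          simp only [hg, hh, hsub]
          rw [show A (M - m + 1) = A (M - m) * (1 - p * q ^ (M - m)) by
            simp [hA, Finset.prod_range_succ]]
          ring
      _ = 1 := ih

/-- Quotient form of the order-j q-factorial. -/
lemma qFacOrdZ_eq_div {q : ℝ} (hq : 0 < q) (hq1 : q ≠ 1) (j κ : ℕ) (h : j ≤ κ) :
    qFacOrdZ q (κ : ℤ) j = qFac q κ / qFac q (κ - j) := by
  induction j with
  | zero => simp [qFacOrdZ, div_self (qFac_ne_zero hq hq1 κ)]
  | succ j ih =>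
    have hj : j ≤ κ := by omega
    rw [qFacOrdZ, Finset.prod_range_succ, ← qFacOrdZ, ih hj]
    obtain ⟨d, hd⟩ : ∃ d, κ - j = d + 1 := ⟨κ - (j + 1), by omega⟩
    have hκj : (κ : ℤ) - (j : ℤ) = (d : ℤ) + 1 := by
      have : κ - j = d + 1 := hd
      omega
    have hsub : κ - (j + 1) = d := by omega
    rw [hκj, hsub, hd, qFac_succ]
    have hfd := qFac_ne_zero hq hq1 d
    have hnd := qNumZ_succ_ne_zero hq hq1 d
    field_simp

/-- Absorption identity. -/
lemma qFacOrd_mul_qBinom {q : ℝ} (hq : 0 < q) (hq1 : q ≠ 1) {j κ n : ℕ}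
    (hjκ : j ≤ κ) (hκn : κ ≤ n) :
    qFacOrdZ q (κ : ℤ) j * qBinom q n κ
      = qFacOrdZ q (n : ℤ) j * qBinom q (n - j) (κ - j) := by
  rw [qFacOrdZ_eq_div hq hq1 j κ hjκ, qFacOrdZ_eq_div hq hq1 j n (hjκ.trans hκn),
    qBinom, qBinom]
  have h1 : n - j - (κ - j) = n - κ := by omega
  rw [h1]
  have a1 := qFac_ne_zero hq hq1 κ
  have a2 := qFac_ne_zero hq hq1 (κ - j)
  have a3 := qFac_ne_zero hq hq1 (n - κ)
  have a4 := qFac_ne_zero hq hq1 (n - j)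
  have a5 := qFac_ne_zero hq hq1 n
  field_simp

/-- The j-th order q-deformed factorial moment of the q-binomial distribution. -/
theorem q_binomial_factorial_moment (q : ℝ) (hq : 0 < q) (hq1 : q ≠ 1)
    (n j : ℕ) (hj : j ≤ n) (p₀ : ℝ) :
    ∑ κ ∈ Finset.Icc j n,
        qFacOrdZ q (κ : ℤ) j * qBinom q n κ * p₀ ^ κ
          * ∏ i ∈ Finset.range (n - κ), (1 - p₀ * q ^ i) =
      qFacOrdZ q (n : ℤ) j * p₀ ^ j := by
  rw [← Finset.Ico_add_one_right_eq_Icc, Finset.sum_Ico_eq_sum_range]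
  have hrange : n + 1 - j = (n - j) + 1 := by omega
  rw [hrange]
  have step : ∀ m ∈ Finset.range ((n - j) + 1),
      qFacOrdZ q ((j + m : ℕ) : ℤ) j * qBinom q n (j + m) * p₀ ^ (j + m)
          * ∏ i ∈ Finset.range (n - (j + m)), (1 - p₀ * q ^ i)
        = qFacOrdZ q (n : ℤ) j * p₀ ^ j
            * (qBinom q (n - j) m * p₀ ^ m
              * ∏ i ∈ Finset.range ((n - j) - m), (1 - p₀ * q ^ i)) := by
    intro m hm
    rw [Finset.mem_range] at hm
    have hκn : j + m ≤ n := by omega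
    rw [qFacOrd_mul_qBinom hq hq1 (Nat.le_add_right j m) hκn]
    have h1 : j + m - j = m := by omega
    have h2 : n - (j + m) = (n - j) - m := by omega
    rw [h1, h2, pow_add]
    ring
  rw [Finset.sum_congr rfl step, ← Finset.mul_sum, qBinom_sum_one hq hq1 p₀ (n - j), mul_one]
end

section
/- Let p and q be real numbers with 0 < q < p ≤ 1, and let z be a real number with |z| < p/(p−q). Then the series E_{p,q}(−z) = Σ_{n=0}^{∞} q^{n(n−1)/2} (−z)^n/[n]_{p,q}! and e_{p,q}(z) = Σ_{n=0}^{∞} p^{n(n−1)/2} z^n/[n]_{p,q}! both converge absolutely, and E_{p,q}(−z) · e_{p,q}(z) = 1. -/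
/-- The (p,q)-deformed number `[n]_{p,q} = (p^n - q^n)/(p - q)` for `n ∈ ℕ`. -/
noncomputable def pqNumN (p q : ℝ) (n : ℕ) : ℝ := (p ^ n - q ^ n) / (p - q)

/-- The (p,q)-factorial `[n]_{p,q}! = ∏_{i=1}^n [i]_{p,q}`. -/
noncomputable def pqFac (p q : ℝ) (n : ℕ) : ℝ := ∏ i ∈ Finset.range n, pqNumN p q (i + 1)

lemma pqNumN_pos {p q : ℝ} (hq : 0 < q) (hqp : q < p) (n : ℕ) :
    0 < pqNumN p q (n + 1) := by
  apply div_pos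
  · exact sub_pos.2 (pow_lt_pow_left₀ hqp hq.le (Nat.succ_ne_zero n))
  · exact sub_pos.2 hqp

lemma pqNumN_zero (p q : ℝ) : pqNumN p q 0 = 0 := by simp [pqNumN]

lemma pqFac_pos {p q : ℝ} (hq : 0 < q) (hqp : q < p) (n : ℕ) : 0 < pqFac p q n :=
  Finset.prod_pos fun i _ => pqNumN_pos hq hqp i

lemma pqFac_succ (p q : ℝ) (n : ℕ) :
    pqFac p q (n + 1) = pqFac p q n * pqNumN p q (n + 1) :=
  Finset.prod_range_succ _ n

lemma pq_pascal {p q : ℝ} (hqp' : q < p) (a b : ℕ) :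
    pqNumN p q (a + b) = q ^ a * pqNumN p q b + p ^ b * pqNumN p q a := by
  have h : p - q ≠ 0 := sub_ne_zero.2 (ne_of_gt hqp')
  unfold pqNumN
  field_simp
  ring

lemma choose_two_succ (k : ℕ) : (k + 1).choose 2 = k.choose 2 + k := by
  rw [Nat.choose_succ_succ k 1, Nat.choose_one_right, Nat.add_comm]

lemma sum_T {p q : ℝ} (hq : 0 < q) (hqp : q < p) (m : ℕ) :
    ∑ k ∈ Finset.range (m + 2),
      (-1 : ℝ) ^ k * q ^ (k.choose 2) * p ^ ((m + 1 - k).choose 2) /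
        (pqFac p q k * pqFac p q (m + 1 - k)) = 0 := by
  have hnum : pqNumN p q (m + 1) ≠ 0 := ne_of_gt (pqNumN_pos hq hqp m)
  have key : (∑ k ∈ Finset.range (m + 2),
      (-1 : ℝ) ^ k * q ^ (k.choose 2) * p ^ ((m + 1 - k).choose 2) /
        (pqFac p q k * pqFac p q (m + 1 - k))) * pqNumN p q (m + 1) = 0 := by
    rw [Finset.sum_mul]
    set F : ℕ → ℝ := fun k =>
      (-1 : ℝ) ^ k * q ^ (k.choose 2) * p ^ ((m + 1 - k).choose 2) /
        (pqFac p q k * pqFac p q (m + 1 - k)) * (q ^ k * pqNumN p q (m + 1 - k)) with hF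
    set G : ℕ → ℝ := fun k =>
      (-1 : ℝ) ^ k * q ^ (k.choose 2) * p ^ ((m + 1 - k).choose 2) /
        (pqFac p q k * pqFac p q (m + 1 - k)) * (p ^ (m + 1 - k) * pqNumN p q k) with hG
    have step1 : ∀ k ∈ Finset.range (m + 2),
        (-1 : ℝ) ^ k * q ^ (k.choose 2) * p ^ ((m + 1 - k).choose 2) /
          (pqFac p q k * pqFac p q (m + 1 - k)) * pqNumN p q (m + 1) = F k + G k := by
      intro k hk
      have hk' : k ≤ m + 1 := by
        have := Finset.mem_range.1 hk; omega
      have hsplit : pqNumN p q (m + 1) = q ^ k * pqNumN p q (m + 1 - k)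
          + p ^ (m + 1 - k) * pqNumN p q k := by
        have : k + (m + 1 - k) = m + 1 := by omega
        conv_lhs => rw [← this, pq_pascal hqp]
      rw [hsplit, hF, hG]; ring
    rw [Finset.sum_congr rfl step1, Finset.sum_add_distrib]
    have hFlast : F (m + 1) = 0 := by
      simp [hF, pqNumN_zero]
    have hG0 : G 0 = 0 := by
      simp [hG, pqNumN_zero]
    have hGsum : ∑ x ∈ Finset.range (m + 2), G x = ∑ k ∈ Finset.range (m + 1), G (k + 1) := by
      rw [Finset.sum_range_succ', hG0, add_zero]
    rw [Finset.sum_range_succ, hFlast, add_zero, hGsum, ← Finset.sum_add_distrib]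
    apply Finset.sum_eq_zero
    intro k hk
    have hk' : k ≤ m := by have := Finset.mem_range.1 hk; omega
    obtain ⟨j, hj⟩ := Nat.le.dest hk'
    subst hj
    have h1 : k + j + 1 - k = j + 1 := by omega
    have h2 : k + j + 1 - (k + 1) = j := by omega
    rw [hF, hG]
    simp only [h1, h2]
    have hfj : pqFac p q (j + 1) = pqFac p q j * pqNumN p q (j + 1) := pqFac_succ p q j
    have hfk : pqFac p q (k + 1) = pqFac p q k * pqNumN p q (k + 1) := pqFac_succ p q k
    have hcj : (j + 1).choose 2 = j.choose 2 + j := choose_two_succ j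
    have hck : (k + 1).choose 2 = k.choose 2 + k := choose_two_succ k
    have hnj : pqNumN p q (j + 1) ≠ 0 := ne_of_gt (pqNumN_pos hq hqp j)
    have hnk : pqNumN p q (k + 1) ≠ 0 := ne_of_gt (pqNumN_pos hq hqp k)
    have hfj0 : pqFac p q j ≠ 0 := ne_of_gt (pqFac_pos hq hqp j)
    have hfk0 : pqFac p q k ≠ 0 := ne_of_gt (pqFac_pos hq hqp k)
    rw [hfj, hfk, hcj, hck, pow_add, pow_add, pow_succ]
    field_simp
    ring
  rcases mul_eq_zero.1 key with h | h
  · exact h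
  · exact absurd h hnum

/-- The (p,q)-exponential series `E_{p,q}(-z)` and `e_{p,q}(z)` converge absolutely for
`|z| < p/(p-q)` and multiply to 1. -/
theorem pq_exponential_product (p q : ℝ) (hq : 0 < q) (hqp : q < p) (hp : p ≤ 1)
    (z : ℝ) (hz : |z| < p / (p - q)) :
    Summable (fun n : ℕ => |q ^ n.choose 2 * (-z) ^ n / pqFac p q n|) ∧
    Summable (fun n : ℕ => |p ^ n.choose 2 * z ^ n / pqFac p q n|) ∧
    (∑' n : ℕ, q ^ n.choose 2 * (-z) ^ n / pqFac p q n) *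
      (∑' n : ℕ, p ^ n.choose 2 * z ^ n / pqFac p q n) = 1 := by
  have hp0 : 0 < p := hq.trans hqp
  have hpq : 0 < p - q := sub_pos.2 hqp
  set t : ℝ := |z| * (p - q) / p with ht_def
  have ht0 : 0 ≤ t := by positivity
  have ht1 : t < 1 := by
    rw [ht_def, div_lt_one hp0]
    rw [lt_div_iff₀ hpq] at hz
    linarith
  set c : ℝ := (t + 1) / 2 with hc_def
  have hc1 : c < 1 := by rw [hc_def]; linarith
  have hct : t < c := by rw [hc_def]; linarith
  have hc0 : 0 < c := by rw [hc_def]; linarith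
  -- ratio bound for the `p` series
  have hkey : ∀ n : ℕ, |p ^ (n+1).choose 2 * z ^ (n+1) / pqFac p q (n+1)| =
      |p ^ n.choose 2 * z ^ n / pqFac p q n| * (p ^ n * |z| / pqNumN p q (n+1)) := by
    intro n
    have hfp : 0 < pqFac p q n := pqFac_pos hq hqp n
    have hfp' : 0 < pqFac p q (n + 1) := pqFac_pos hq hqp (n + 1)
    have hnp : 0 < pqNumN p q (n + 1) := pqNumN_pos hq hqp n
    rw [abs_div, abs_div, abs_mul, abs_mul, abs_of_pos hfp, abs_of_pos hfp',
      abs_of_pos (pow_pos hp0 _), abs_of_pos (pow_pos hp0 _),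
      abs_pow, abs_pow, choose_two_succ, pqFac_succ, pow_add, pow_succ]
    field_simp
  have hrq : (0:ℝ) ≤ q / p := by positivity
  have hrq1 : q / p < 1 := (div_lt_one hp0).2 hqp
  have hev : ∀ᶠ n : ℕ in Filter.atTop, (q / p) ^ (n + 1) < (c - t) / c := by
    have htend := tendsto_pow_atTop_nhds_zero_of_lt_one hrq hrq1
    have h1 : ∀ᶠ n : ℕ in Filter.atTop, (q / p) ^ n < (c - t) / c :=
      htend.eventually_lt_const (div_pos (by linarith) hc0)
    rw [Filter.eventually_atTop] at h1 ⊢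
    obtain ⟨N, hN⟩ := h1
    exact ⟨N, fun n hn => hN (n + 1) (by omega)⟩
  have hratio : ∀ n : ℕ, (q / p) ^ (n + 1) < (c - t) / c →
      p ^ n * |z| / pqNumN p q (n + 1) ≤ c := by
    intro n hn
    have hnp : 0 < pqNumN p q (n + 1) := pqNumN_pos hq hqp n
    have hqppow : (q / p) ^ (n + 1) * p ^ (n + 1) = q ^ (n + 1) := by
      rw [div_pow, div_mul_cancel₀]
      exact (pow_pos hp0 _).ne'
    have hm : (q / p) ^ (n + 1) * p ^ (n + 1) < (c - t) / c * p ^ (n + 1) :=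
      mul_lt_mul_of_pos_right hn (pow_pos hp0 _)
    rw [hqppow] at hm
    -- multiply hm by c > 0
    have hm2 : c * q ^ (n + 1) ≤ (c - t) * p ^ (n + 1) := by
      have h3 := mul_le_mul_of_nonneg_left hm.le hc0.le
      have h4 : c * ((c - t) / c * p ^ (n + 1)) = (c - t) * p ^ (n + 1) := by
        field_simp
      linarith [h3, h4.le]
    have ht_p : t * p ^ (n + 1) = |z| * (p - q) * p ^ n := by
      rw [ht_def, pow_succ]
      field_simp
    rw [div_le_iff₀ hnp, pqNumN]
    rw [show c * ((p ^ (n+1) - q ^ (n+1)) / (p - q)) = (c * (p ^ (n+1) - q ^ (n+1))) / (p - q)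
      by ring, le_div_iff₀ hpq]
    nlinarith [hm2, ht_p]
  -- summability of the p-series (of absolute values)
  have sumB : Summable (fun n : ℕ => |p ^ n.choose 2 * z ^ n / pqFac p q n|) := by
    apply summable_of_ratio_norm_eventually_le hc1
    filter_upwards [hev] with n hn
    rw [Real.norm_eq_abs, Real.norm_eq_abs, abs_abs, abs_abs, hkey n]
    have h1 : p ^ n * |z| / pqNumN p q (n + 1) ≤ c := hratio n hn
    have h2 : (0:ℝ) ≤ |p ^ n.choose 2 * z ^ n / pqFac p q n| := abs_nonneg _
    calc |p ^ n.choose 2 * z ^ n / pqFac p q n| * (p ^ n * |z| / pqNumN p q (n+1))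
        ≤ |p ^ n.choose 2 * z ^ n / pqFac p q n| * c := mul_le_mul_of_nonneg_left h1 h2
      _ = c * |p ^ n.choose 2 * z ^ n / pqFac p q n| := mul_comm _ _
  have sumA : Summable (fun n : ℕ => |q ^ n.choose 2 * (-z) ^ n / pqFac p q n|) := by
    apply Summable.of_nonneg_of_le (fun n => abs_nonneg _) _ sumB
    intro n
    have hfp : 0 < pqFac p q n := pqFac_pos hq hqp n
    rw [abs_div, abs_div, abs_mul, abs_mul, abs_pow, abs_pow, abs_pow, abs_pow, abs_neg]
    have hqple : |q| ≤ |p| := by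
      rw [abs_of_pos hq, abs_of_pos hp0]; exact hqp.le
    gcongr
  refine ⟨sumA, sumB, ?_⟩
  have hA : Summable fun n : ℕ => ‖q ^ n.choose 2 * (-z) ^ n / pqFac p q n‖ := by
    simpa only [Real.norm_eq_abs] using sumA
  have hB : Summable fun n : ℕ => ‖p ^ n.choose 2 * z ^ n / pqFac p q n‖ := by
    simpa only [Real.norm_eq_abs] using sumB
  have hcoef : ∀ n : ℕ, (∑ k ∈ Finset.range (n+1),
      (q ^ k.choose 2 * (-z) ^ k / pqFac p q k) *
        (p ^ (n-k).choose 2 * z ^ (n-k) / pqFac p q (n-k))) = if n = 0 then (1:ℝ) else 0 := by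
    intro n
    cases n with
    | zero => simp [pqFac]
    | succ m =>
      simp only [Nat.succ_ne_zero, if_false]
      have hterm : ∀ k ∈ Finset.range (m+2),
          (q ^ k.choose 2 * (-z) ^ k / pqFac p q k) *
            (p ^ (m+1-k).choose 2 * z ^ (m+1-k) / pqFac p q (m+1-k)) =
          z ^ (m+1) * ((-1:ℝ) ^ k * q ^ k.choose 2 * p ^ ((m+1-k).choose 2) /
            (pqFac p q k * pqFac p q (m+1-k))) := by
        intro k hk
        have hk' : k ≤ m + 1 := by have := Finset.mem_range.1 hk; omega
        have hzz : z ^ k * z ^ (m+1-k) = z ^ (m+1) := by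
          rw [← pow_add]; congr 1; omega
        rw [neg_pow, ← hzz]; ring
      rw [Finset.sum_congr rfl hterm, ← Finset.mul_sum, sum_T hq hqp m, mul_zero]
  calc (∑' n : ℕ, q ^ n.choose 2 * (-z) ^ n / pqFac p q n) *
      (∑' n : ℕ, p ^ n.choose 2 * z ^ n / pqFac p q n)
      = ∑' n : ℕ, ∑ k ∈ Finset.range (n+1),
          (q ^ k.choose 2 * (-z) ^ k / pqFac p q k) *
            (p ^ (n-k).choose 2 * z ^ (n-k) / pqFac p q (n-k)) :=
        tsum_mul_tsum_eq_tsum_sum_range_of_summable_norm hA hB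
    _ = ∑' n : ℕ, (if n = 0 then (1:ℝ) else 0) := tsum_congr hcoef
    _ = 1 := tsum_ite_eq 0 1
end
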